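/- arXiv:2412.21183 — 5 statements merged into one kernel-verified Lean document; each statement's English description precedes it below -/
import Mathlib

section
/- Let G be a group, 𝔼/ℍ a finite Galois extension of fields with group Δ, and V an n-dimensional 𝔼-vector space with a semisimple representation ρ : G → GL(V) such that End_{𝔼[G]}(V) = 𝔼 and every ρ(s) has characteristic polynomial with coefficients in ℍ. For each g ∈ Δ fix A_g ∈ GL_n(𝔼) intertwining ρ and its Galois conjugate ᵍρ (i.e. A_g · ᵍρ(s) = ρ(s) · A_g for all s ∈ G). Then for all g, h ∈ Δ the matrix c(g,h) := A_g · ᵍ(A_h) · A_{gh}^{-1} is a scalar matrix, and the resulting map c : Δ × Δ → 𝔼ˣ is a 2-cocycle for the natural action of Δ on 𝔼ˣ. -/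
/-- Let `G` be a group, `𝔼/ℍ` a finite Galois extension with group
`Δ = Gal(𝔼/ℍ)`, and `V` a finite-dimensional `𝔼`-vector space with a semisimple
representation `ρ` of `G` such that `End_{𝔼[G]}(V) = 𝔼` and all characteristic
polynomials of `ρ(s)` have coefficients in `ℍ`.  Given for each `g ∈ Δ` an intertwiner
`A g` between `ρ` and its Galois conjugate `ᵍρ` (an `ℍ`-linear bijection of `V` which is
`g`-semilinear and commutes with the `G`-action), the quantity
`c(g,h) := A g ∘ (ᵍA h) ∘ A (g h)⁻¹` is a scalar in `𝔼ˣ`, and `c` is a 2-cocycle for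
the natural action of `Δ` on `𝔼ˣ`. -/
theorem intertwiner_scalar_two_cocycle
    (G ℍ 𝔼 V : Type*) [Group G] [Field ℍ] [Field 𝔼] [Algebra ℍ 𝔼]
    [FiniteDimensional ℍ 𝔼] [IsGalois ℍ 𝔼]
    [AddCommGroup V] [Module 𝔼 V] [FiniteDimensional 𝔼 V]
    [Module ℍ V] [IsScalarTower ℍ 𝔼 V]
    (ρ : Representation 𝔼 G V)
    (hss : IsSemisimpleModule (MonoidAlgebra 𝔼 G) ρ.asModule)
    (hEnd : ∀ f : V →ₗ[𝔼] V, (∀ s : G, f ∘ₗ ρ s = ρ s ∘ₗ f) →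
      ∃ a : 𝔼, f = a • LinearMap.id)
    (hchar : ∀ (s : G) (i : ℕ), ((ρ s).charpoly).coeff i ∈ (algebraMap ℍ 𝔼).range)
    (A : (𝔼 ≃ₐ[ℍ] 𝔼) → (V ≃ₗ[ℍ] V))
    (hsemi : ∀ (g : 𝔼 ≃ₐ[ℍ] 𝔼) (a : 𝔼) (v : V), A g (a • v) = g a • A g v)
    (hG : ∀ (g : 𝔼 ≃ₐ[ℍ] 𝔼) (s : G) (v : V), A g (ρ s v) = ρ s (A g v)) :
    ∃ c : (𝔼 ≃ₐ[ℍ] 𝔼) → (𝔼 ≃ₐ[ℍ] 𝔼) → 𝔼ˣ,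
      (∀ (g h : 𝔼 ≃ₐ[ℍ] 𝔼) (v : V), A g (A h v) = (c g h : 𝔼) • A (g * h) v) ∧
      (∀ f g h : 𝔼 ≃ₐ[ℍ] 𝔼,
        (c f g : 𝔼) * (c (f * g) h : 𝔼) = f (c g h : 𝔼) * (c f (g * h) : 𝔼)) := by
  rcases subsingleton_or_nontrivial V with hV | hV
  · exact ⟨fun _ _ => 1, fun g h v => Subsingleton.elim _ _,
      fun f g h => by simp⟩
  · have hinv : ∀ (k : 𝔼 ≃ₐ[ℍ] 𝔼) (a : 𝔼) (v : V),
        (A k).symm (a • v) = k.symm a • (A k).symm v := by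
      intro k a v
      apply (A k).injective
      rw [hsemi, (A k).apply_symm_apply, (A k).apply_symm_apply,
        AlgEquiv.apply_symm_apply]
    have hinvG : ∀ (k : 𝔼 ≃ₐ[ℍ] 𝔼) (s : G) (v : V),
        (A k).symm (ρ s v) = ρ s ((A k).symm v) := by
      intro k s v
      apply (A k).injective
      rw [(A k).apply_symm_apply, hG, (A k).apply_symm_apply]
    have key : ∀ g h : 𝔼 ≃ₐ[ℍ] 𝔼, ∃ a : 𝔼ˣ,
        ∀ v, A g (A h v) = (a : 𝔼) • A (g * h) v := by
      intro g h
      set F : V →ₗ[𝔼] V :=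
        { toFun := fun v => A g (A h ((A (g * h)).symm v))
          map_add' := by intro x y; simp
          map_smul' := by
            intro a v
            simp only [RingHom.id_apply]
            rw [hinv, hsemi, hsemi, ← AlgEquiv.mul_apply, AlgEquiv.apply_symm_apply] }
        with hFdef
      have hcomm : ∀ s : G, F ∘ₗ ρ s = ρ s ∘ₗ F := by
        intro s
        ext v
        simp only [LinearMap.coe_comp, Function.comp_apply, hFdef, LinearMap.coe_mk,
          AddHom.coe_mk]
        rw [hinvG, hG, hG]
      obtain ⟨a, ha⟩ := hEnd F hcomm
      have ha' : ∀ v, A g (A h v) = a • A (g * h) v := by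
        intro v
        have h1 := LinearMap.ext_iff.mp ha (A (g * h) v)
        simpa [hFdef] using h1
      obtain ⟨v, hv⟩ := exists_ne (0 : V)
      have hne : A g (A h v) ≠ 0 := by
        simp only [ne_eq, EmbeddingLike.map_eq_zero_iff]
        exact hv
      have ha0 : a ≠ 0 := by
        intro h0
        rw [ha' v, h0, zero_smul] at hne
        exact hne rfl
      exact ⟨Units.mk0 a ha0, ha'⟩
    choose c hc using key
    refine ⟨c, hc, ?_⟩
    intro f g h
    obtain ⟨v, hv⟩ := exists_ne (0 : V)
    have hw : A (f * g * h) v ≠ 0 := by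
      simp only [ne_eq, EmbeddingLike.map_eq_zero_iff]
      exact hv
    have e1 : A f (A g (A h v)) =
        ((c f g : 𝔼) * (c (f * g) h : 𝔼)) • A (f * g * h) v := by
      rw [hc f g (A h v), hc (f * g) h v, smul_smul]
    have e2 : A f (A g (A h v)) =
        (f (c g h : 𝔼) * (c f (g * h) : 𝔼)) • A (f * g * h) v := by
      rw [hc g h v, hsemi, hc f (g * h) v, smul_smul, ← mul_assoc]
    have := e1.symm.trans e2
    exact smul_left_injective 𝔼 hw this
end

section
/- Let P(T) ∈ ℤ[T] be an irreducible polynomial of degree 2g with reciprocal roots α₁, …, α_{2g} (so P(T) = ∏(1 − α_i T)), and for n ≥ 1 define P_n(T) = ∏(1 − α_i^n T). Then P_n(T) is irreducible over ℚ for all n ≥ 1 if and only if for all i ≠ j the quotient α_i/α_j is not a root of unity. -/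
open Polynomial IntermediateField

/-! If `α_i ^ k = α_j ^ k` with `i ≠ j`, then `1 - α_i ^ k T` divides `P_k` twice over `ℂ`, which
an irreducible, hence separable, polynomial over `ℚ` cannot allow. Conversely, the `α_i⁻¹` are the
roots of the irreducible `P`, hence conjugate, so the `α_i⁻ⁿ` are all roots of the minimal
polynomial `M` of `α_{i₀}⁻ⁿ`. Its degree divides `[ℚ(α_{i₀}⁻¹) : ℚ] = 2g`, so once the `α_iⁿ` are
distinct, `M = ∏ (X - α_i⁻ⁿ)`, and `P_n` is `M` rescaled to constant term `1`. -/

theorem IsConjRoot.pow {K A : Type*} [Field K] [CommRing A] [IsDomain A] [Algebra K A] {x y : A}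
    (hx : IsIntegral K x) (h : IsConjRoot K x y) (n : ℕ) : IsConjRoot K (x ^ n) (y ^ n) := by
  refine isConjRoot_of_aeval_eq_zero (hx.pow n) ?_
  have hdvd : minpoly K y ∣ (minpoly K (x ^ n)).comp (X ^ n) :=
    h ▸ minpoly.dvd K x (by simp [aeval_comp])
  simpa [aeval_comp] using aeval_eq_zero_of_dvd_aeval_eq_zero hdvd (minpoly.aeval K y)

theorem minpoly.natDegree_pow_dvd {K L : Type*} [Field K] [Field L] [Algebra K L] {x : L}
    (hx : IsIntegral K x) (n : ℕ) :
    (minpoly K (x ^ n)).natDegree ∣ (minpoly K x).natDegree := by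
  have : FiniteDimensional K K⟮x⟯ := adjoin.finiteDimensional hx
  let y : K⟮x⟯ := ⟨x ^ n, pow_mem (mem_adjoin_simple_self K x) n⟩
  rw [← adjoin.finrank hx, show x ^ n = algebraMap K⟮x⟯ L y from rfl,
    minpoly.algebraMap_eq (algebraMap K⟮x⟯ L).injective y]
  exact minpoly.degree_dvd (Algebra.IsIntegral.isIntegral y)

theorem Polynomial.eq_prod_X_sub_C_of_injective {R ι : Type*} [CommRing R] [IsDomain R]
    [Fintype ι] {p : R[X]} (hp : p.Monic) {s : ι → R} (hs : Function.Injective s)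
    (hroot : ∀ i, p.IsRoot (s i)) (hdeg : p.natDegree ≤ Fintype.card ι) :
    p = ∏ i, (X - C (s i)) := by
  have hnodup : (Finset.univ.val.map s).Nodup := Finset.univ.nodup.map hs
  have hle : Finset.univ.val.map s ≤ p.roots := by
    rw [Multiset.le_iff_subset hnodup]
    intro x hx
    obtain ⟨i, -, rfl⟩ := Multiset.mem_map.mp hx
    exact (mem_roots hp.ne_zero).mpr (hroot i)
  have hdvd : ∏ i, (X - C (s i)) ∣ p := by
    have := (Multiset.prod_X_sub_C_dvd_iff_le_roots hp.ne_zero _).mpr hle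
    rwa [Multiset.map_map] at this
  exact eq_of_monic_of_dvd_of_natDegree_le (monic_prod_of_monic _ _ fun i _ => monic_X_sub_C _)
    hp hdvd (by simpa [natDegree_prod_of_monic, monic_X_sub_C] using hdeg)

theorem Polynomial.prod_one_sub_C_mul_X_eq {F ι : Type*} [Field F] [Fintype ι] {a : ι → F}
    (ha : ∀ i, a i ≠ 0) :
    ∏ i, (1 - C (a i) * X) =
      C ((∏ i, (X - C (a i)⁻¹)).coeff 0)⁻¹ * ∏ i, (X - C (a i)⁻¹) := by
  have hfactor : ∀ i, 1 - C (a i) * X = C (-(a i)⁻¹)⁻¹ * (X - C (a i)⁻¹) := fun i => by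
    rw [inv_neg, inv_inv, mul_sub, ← C_mul, neg_mul, mul_inv_cancel₀ (ha i), C_neg, C_neg, C_1]
    ring
  simp only [coeff_zero_eq_eval_zero, eval_prod, eval_sub, eval_X, eval_C, zero_sub,
    ← Finset.prod_inv_distrib, map_prod, ← Finset.prod_mul_distrib, hfactor]

theorem Polynomial.not_isUnit_one_sub_C_mul_X {R : Type*} [CommRing R] [IsDomain R] {b : R}
    (hb : b ≠ 0) : ¬IsUnit (1 - C b * X) := by
  intro h
  have hcoeff := coeff_eq_zero_of_natDegree_lt (p := 1 - C b * X) (n := 1)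
    (by rw [natDegree_eq_zero_of_isUnit h]; exact one_pos)
  exact hb (by simpa [coeff_one] using hcoeff)

theorem not_squarefree_prod_of_eq {M ι : Type*} [CommMonoid M] [Fintype ι] [DecidableEq ι]
    {f : ι → M} {i j : ι} (hij : i ≠ j) (hf : f i = f j) (hu : ¬IsUnit (f i)) :
    ¬Squarefree (∏ k, f k) := fun h =>
  hu <| h (f i) <| by
    simpa [Finset.prod_pair hij, hf] using
      Finset.prod_dvd_prod_of_subset {i, j} Finset.univ f (Finset.subset_univ _)

theorem Irreducible.eq_zero_of_map_eq_prod_one_sub_C_mul_X {K L ι : Type*} [Field K] [CharZero K]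
    [Field L] [Algebra K L] [Fintype ι] {Q : K[X]} (hQ : Irreducible Q) {β : ι → L}
    (hmap : Q.map (algebraMap K L) = ∏ i, (1 - C (β i) * X)) {i j : ι} (hij : i ≠ j)
    (hβ : β i = β j) : β i = 0 := by
  classical
  by_contra hβi
  refine not_squarefree_prod_of_eq (f := fun k => 1 - C (β k) * X) hij (by rw [hβ])
    (not_isUnit_one_sub_C_mul_X hβi) ?_
  exact hmap ▸ hQ.separable.map.squarefree

theorem Irreducible.exists_irreducible_map_eq_prod_one_sub_pow_mul_X {K L ι : Type*} [Field K]
    [Field L] [Algebra K L] [Fintype ι] [Nonempty ι] {P : K[X]} (hP : Irreducible P)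
    (hdeg : P.natDegree ≤ Fintype.card ι) {α : ι → L} (hα : ∀ i, α i ≠ 0)
    (hroot : ∀ i, aeval (α i)⁻¹ P = 0) {n : ℕ} (hinj : Function.Injective fun i => α i ^ n) :
    ∃ Pn : K[X], Pn.map (algebraMap K L) = ∏ i, (1 - C (α i ^ n) * X) ∧ Irreducible Pn := by
  obtain ⟨i₀⟩ := ‹Nonempty ι›
  have hint : IsIntegral K (α i₀)⁻¹ := IsAlgebraic.isIntegral ⟨P, hP.ne_zero, hroot i₀⟩
  have hconj : ∀ i, IsConjRoot K (α i₀)⁻¹ (α i)⁻¹ := fun i =>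
    (minpoly.eq_of_irreducible hP (hroot i₀)).symm.trans (minpoly.eq_of_irreducible hP (hroot i))
  set M := minpoly K ((α i₀)⁻¹ ^ n)
  have hM : M.map (algebraMap K L) = ∏ i, (X - C (α i ^ n)⁻¹) := by
    refine eq_prod_X_sub_C_of_injective ((minpoly.monic (hint.pow n)).map _)
      (inv_injective.comp hinj) (fun i => ?_) ?_
    · rw [IsRoot, eval_map_algebraMap, ← inv_pow]
      exact ((hconj i).pow hint n).aeval_eq_zero
    · calc (M.map (algebraMap K L)).natDegree ≤ (minpoly K (α i₀)⁻¹).natDegree :=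
            (natDegree_map_le).trans (Nat.le_of_dvd (minpoly.natDegree_pos hint)
              (minpoly.natDegree_pow_dvd hint n))
        _ = P.natDegree := by
            rw [← minpoly.eq_of_irreducible hP (hroot i₀),
              natDegree_mul_C (inv_ne_zero (leadingCoeff_ne_zero.mpr hP.ne_zero))]
        _ ≤ Fintype.card ι := hdeg
  have hM0 : M.coeff 0 ≠ 0 :=
    minpoly.coeff_zero_ne_zero (hint.pow n) (pow_ne_zero n (inv_ne_zero (hα i₀)))
  refine ⟨C (M.coeff 0)⁻¹ * M, ?_, ?_⟩
  · rw [prod_one_sub_C_mul_X_eq fun i => pow_ne_zero n (hα i), ← hM, Polynomial.map_mul, map_C,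
      coeff_map, map_inv₀]
  · exact (irreducible_isUnit_mul (isUnit_C.mpr (inv_ne_zero hM0).isUnit)).mpr
      (minpoly.irreducible (hint.pow n))

/-- Let `P(T) ∈ ℚ[T]` be irreducible of degree `2g` with reciprocal
roots `α₁, …, α_{2g}` (so `P(T) = ∏ (1 − αᵢ T)` over `ℂ`), and for `n ≥ 1` let
`P_n(T) = ∏ (1 − αᵢⁿ T)`.  Then `P_n` is irreducible over `ℚ` for all `n ≥ 1` iff for all
`i ≠ j` the quotient `αᵢ/αⱼ` is not a root of unity. -/
theorem stably_irreducible_iff_no_root_of_unity_quotient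
    (g : ℕ) (hg : 0 < g) (P : Polynomial ℚ) (hirr : Irreducible P)
    (hdeg : P.natDegree = 2 * g)
    (α : Fin (2 * g) → ℂ) (hα : ∀ i, α i ≠ 0)
    (hfact : P.map (algebraMap ℚ ℂ) = ∏ i, (1 - C (α i) * X)) :
    (∀ n : ℕ, 1 ≤ n → ∃ Pn : Polynomial ℚ,
        Pn.map (algebraMap ℚ ℂ) = ∏ i, (1 - C (α i ^ n) * X) ∧ Irreducible Pn) ↔
    (∀ i j, i ≠ j → ¬ ∃ k : ℕ, 0 < k ∧ (α i / α j) ^ k = 1) := by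
  have hquot : ∀ i j k, (α i / α j) ^ k = 1 ↔ α i ^ k = α j ^ k := fun i j k => by
    rw [div_pow, div_eq_one_iff_eq (pow_ne_zero k (hα j))]
  constructor
  · rintro hstable i j hij ⟨k, hk, hroot⟩
    obtain ⟨Pk, hmap, hPk⟩ := hstable k hk
    exact pow_ne_zero k (hα i) (hPk.eq_zero_of_map_eq_prod_one_sub_C_mul_X hmap hij
      ((hquot i j k).mp hroot))
  · intro hquotient n hn
    have : Nonempty (Fin (2 * g)) := ⟨⟨0, by omega⟩⟩
    refine hirr.exists_irreducible_map_eq_prod_one_sub_pow_mul_X (by simp [hdeg]) hα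
      (fun i => ?_) (fun i j hij => ?_)
    · rw [aeval_def, ← eval_map, hfact, eval_prod]
      exact Finset.prod_eq_zero (Finset.mem_univ i) (by simp [hα i])
    · by_contra hne
      exact hquotient i j hne ⟨n, hn, (hquot i j n).mpr hij⟩
end

section
/- Let k be a field, G a group, L a 1-dimensional character χ : G → kˣ with kernel of finite index, and V a finite-dimensional semisimple k[G]-module with End_{k[G]}(V) of k-dimension d². Let G_L = ker χ and suppose V ≅ χ ⊗ V as k[G]-modules and End_{k[G_L]}(V) also has k-dimension d². Then χ is trivial. -/
/-- The `k`-submodule of `End_k(V)` consisting of endomorphisms commuting with the action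
of a subgroup `H ≤ G` through the representation `ρ`, i.e. `End_{k[H]}(V)`. -/
def equivariantEnd {k G V : Type*} [CommRing k] [Group G] [AddCommGroup V] [Module k V]
    (ρ : Representation k G V) (H : Subgroup G) : Submodule k (V →ₗ[k] V) where
  carrier := {f | ∀ s ∈ H, f ∘ₗ ρ s = ρ s ∘ₗ f}
  add_mem' := by
    intro f g hf hg s hs
    simp only [LinearMap.add_comp, LinearMap.comp_add, hf s hs, hg s hs]
  zero_mem' := by
    intro s hs
    simp
  smul_mem' := by
    intro a f hf s hs
    simp only [LinearMap.smul_comp, LinearMap.comp_smul, hf s hs]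

/-- Let `k` be a field, `G` a group, `χ : G → kˣ` a character whose
kernel `G_L` has finite index, and `V` a finite-dimensional semisimple `k[G]`-module with
`dim_k End_{k[G]}(V) = d²`.  If `V ≅ χ ⊗ V` as `k[G]`-modules and
`dim_k End_{k[G_L]}(V) = d²` as well, then `χ` is trivial. -/
theorem character_trivial_of_twist_iso
    (k G V : Type*) [Field k] [Group G] [AddCommGroup V] [Module k V]
    [FiniteDimensional k V]
    (ρ : Representation k G V) (χ : G →* kˣ)
    (hfin : χ.ker.FiniteIndex)
    (hss : IsSemisimpleModule (MonoidAlgebra k G) ρ.asModule)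
    (d : ℕ) (hd : 0 < d)
    (hEndG : Module.finrank k (equivariantEnd ρ ⊤) = d ^ 2)
    (htwist : ∃ e : V ≃ₗ[k] V, ∀ (s : G) (v : V), e (ρ s v) = (χ s : k) • ρ s (e v))
    (hEndGL : Module.finrank k (equivariantEnd ρ χ.ker) = d ^ 2) :
    ∀ s : G, χ s = 1 := by
  classical
  -- V is nontrivial, else the endomorphism space has finrank 0 ≠ d²
  have hV : Nontrivial V := by
    by_contra h
    have : Subsingleton V := not_nontrivial_iff_subsingleton.mp h
    have : Subsingleton (V →ₗ[k] V) := inferInstance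
    have : Subsingleton (equivariantEnd ρ (⊤ : Subgroup G)) := inferInstance
    have h0 : Module.finrank k (equivariantEnd ρ (⊤ : Subgroup G)) = 0 :=
      Module.finrank_zero_of_subsingleton
    rw [hEndG] at h0
    exact (pow_pos hd 2).ne' h0
  obtain ⟨v, hv⟩ := exists_ne (0 : V)
  have hle : equivariantEnd ρ (⊤ : Subgroup G) ≤ equivariantEnd ρ χ.ker := by
    intro f hf s hs
    exact hf s trivial
  have heq : equivariantEnd ρ (⊤ : Subgroup G) = equivariantEnd ρ χ.ker :=
    Submodule.eq_of_le_of_finrank_eq hle (hEndG.trans hEndGL.symm)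
  obtain ⟨e, he⟩ := htwist
  have hmem : (e : V →ₗ[k] V) ∈ equivariantEnd ρ χ.ker := by
    intro s hs
    ext w
    have hχ : χ s = 1 := hs
    simp [he s w, hχ]
  rw [← heq] at hmem
  intro s
  have hcomm := hmem s trivial
  have h1 : e (ρ s v) = ρ s (e v) := congrFun (congrArg DFunLike.coe hcomm) v
  have h2 : e (ρ s v) = (χ s : k) • ρ s (e v) := he s v
  have hne : ρ s (e v) ≠ 0 := by
    intro h0
    have : e v = 0 := by
      have h1 := congrArg (ρ s⁻¹) h0
      rwa [← Module.End.mul_apply, ← map_mul, inv_mul_cancel, map_one,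
        Module.End.one_apply, map_zero] at h1
    exact hv (e.injective (by simpa using this))
  have : (χ s : k) • ρ s (e v) = (1 : k) • ρ s (e v) := by
    rw [← h2, h1, one_smul]
  have hk : (χ s : k) = 1 := by
    by_contra hk
    exact hne (by
      have := sub_eq_zero.mpr this
      rw [← sub_smul] at this
      exact (smul_eq_zero.mp this).resolve_left (sub_ne_zero.mpr (by simpa using hk)))
  exact Units.ext hk
end

section
/- Let H/F be an extension of number fields (or more generally fields of characteristic zero) with F totally real, and suppose H is generated over F by elements α_s (s ranging over a set S) such that for each s, the product α_s · c(α_s) lies in F, where c is an automorphism of H over F of order at most 2 acting as complex conjugation. Suppose moreover there is a character ε : S → Hˣ of finite order m with α_s² = α_s·c(α_s)·ε(s). Then H is contained in the field obtained from F by adjoining the square roots of the elements α_s·c(α_s) together with a primitive 2m-th root of unity; in particular H/F is abelian. -/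
/-!
Since `ε s` is an `m`-th root of unity, it is `ζ ^ (2 * k)` for some `k`, so `α s * ζ⁻¹ ^ k` is a
square root of `α s * c (α s) ∈ F`. Hence every generator `α s`, and with it all of `H`, lies in
the field `F(ζ, √F)` generated by `ζ` and all square roots of elements of `F`. An automorphism of
that field sends `ζ` to a power of `ζ` and each square root to `±` itself, so any two automorphisms
commute on generators: `F(ζ, √F)` is an abelian extension of `F`, and so is its subextension `H`.
-/

open Polynomial IntermediateField

namespace AlgEquiv

variable {F E : Type*} [Field F] [Field E] [Algebra F E]

theorem apply_eq_or_eq_neg_of_sq_eq_algebraMap (σ : E ≃ₐ[F] E) {x : E} {b : F}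
    (hx : x ^ 2 = algebraMap F E b) : σ x = x ∨ σ x = -x :=
  sq_eq_sq_iff_eq_or_eq_neg.mp (by rw [← map_pow, hx, commutes])

theorem apply_apply_comm_of_sq_eq_algebraMap (σ τ : E ≃ₐ[F] E) {x : E} {b : F}
    (hx : x ^ 2 = algebraMap F E b) : σ (τ x) = τ (σ x) := by
  rcases τ.apply_eq_or_eq_neg_of_sq_eq_algebraMap hx with hτ | hτ <;>
  rcases σ.apply_eq_or_eq_neg_of_sq_eq_algebraMap hx with hσ | hσ <;>
  simp only [hσ, hτ, map_neg]

theorem apply_apply_comm_of_isPrimitiveRoot (σ τ : E ≃ₐ[F] E) {n : ℕ} [NeZero n] {ζ : E}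
    (hζ : IsPrimitiveRoot ζ n) : σ (τ ζ) = τ (σ ζ) := by
  obtain ⟨a, -, hσ⟩ := hζ.eq_pow_of_pow_eq_one (ξ := σ ζ)
    (by rw [← map_pow, hζ.pow_eq_one, map_one])
  obtain ⟨b, -, hτ⟩ := hζ.eq_pow_of_pow_eq_one (ξ := τ ζ)
    (by rw [← map_pow, hζ.pow_eq_one, map_one])
  rw [← hσ, ← hτ, map_pow, map_pow, ← hσ, ← hτ, ← pow_mul, ← pow_mul, mul_comm]

end AlgEquiv

namespace IntermediateField

variable {F K : Type*} [Field F] [Field K] [Algebra F K]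

theorem normal_adjoin_of_forall_exists_splits {S : Set K}
    (h : ∀ x ∈ S, ∃ p : F[X], p ≠ 0 ∧ aeval x p = 0 ∧
      (p.map (algebraMap F (adjoin F S))).Splits) :
    Normal F (adjoin F S) := by
  have hint : ∀ x ∈ S, IsIntegral F x := fun x hx => by
    obtain ⟨p, hp, hpx, -⟩ := h x hx
    exact IsAlgebraic.isIntegral ⟨p, hp, hpx⟩
  have hsplit : ∀ x ∈ S, ((minpoly F x).map (algebraMap F (adjoin F S))).Splits := fun x hx => by
    obtain ⟨p, hp, hpx, hps⟩ := h x hx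
    exact hps.of_dvd (map_ne_zero hp) (Polynomial.map_dvd _ (minpoly.dvd F x hpx))
  have := isAlgebraic_adjoin hint
  refine ⟨fun y => ?_⟩
  rw [minpoly_eq]
  exact splits_of_mem_adjoin (F := F) (K := K)
    (splits := fun x hx => ⟨hint x hx, hsplit x hx⟩) (hx := y.2)

theorem mul_comm_of_apply_apply_comm {S : Set K} (σ τ : Gal(adjoin F S / F))
    (h : ∀ x (hx : x ∈ S), σ (τ ⟨x, subset_adjoin F S hx⟩) = τ (σ ⟨x, subset_adjoin F S hx⟩)) :
    σ * τ = τ * σ :=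
  AlgEquiv.coe_toAlgHom_injective (adjoin_algHom_ext F h)

theorem normal_adjoin_insert_sqrt {n : ℕ} [NeZero n] {ζ : K} (hζ : IsPrimitiveRoot ζ n) :
    Normal F (adjoin F (insert ζ {x : K | x ^ 2 ∈ Set.range (algebraMap F K)})) := by
  set L := adjoin F (insert ζ {x : K | x ^ 2 ∈ Set.range (algebraMap F K)})
  refine normal_adjoin_of_forall_exists_splits fun x hx => ?_
  rcases hx with rfl | ⟨b, hb⟩
  · have hζL : IsPrimitiveRoot (⟨x, subset_adjoin F _ (Set.mem_insert x _)⟩ : L) n :=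
      hζ.of_map_of_injective (f := L.val) L.val.injective
    refine ⟨X ^ n - C 1, X_pow_sub_C_ne_zero (NeZero.pos n) 1, by simp [hζ.pow_eq_one], ?_⟩
    simpa using X_pow_sub_one_splits hζL
  · refine ⟨X ^ 2 - C b, X_pow_sub_C_ne_zero two_pos b, by simp [hb], ?_⟩
    set y : L := ⟨x, subset_adjoin F _ (Set.mem_insert_of_mem ζ ⟨b, hb⟩)⟩
    have hy : algebraMap F L b = y ^ 2 := Subtype.ext hb
    have hfactor : (X ^ 2 - C b).map (algebraMap F L) = (X - C y) * (X - C (-y)) := by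
      simp only [Polynomial.map_sub, Polynomial.map_pow, map_X, map_C, hy, map_neg, map_pow]
      ring
    rw [hfactor]
    exact (Splits.X_sub_C _).mul (Splits.X_sub_C _)

theorem isAbelianGalois_adjoin_insert_sqrt [CharZero F] {n : ℕ} [NeZero n] {ζ : K}
    (hζ : IsPrimitiveRoot ζ n) :
    IsAbelianGalois F (adjoin F (insert ζ {x : K | x ^ 2 ∈ Set.range (algebraMap F K)})) := by
  set L := adjoin F (insert ζ {x : K | x ^ 2 ∈ Set.range (algebraMap F K)})
  have := normal_adjoin_insert_sqrt (F := F) hζ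
  have : IsGalois F L := ⟨⟩
  refine { is_comm := ⟨fun σ τ => mul_comm_of_apply_apply_comm σ τ fun x hx => ?_⟩ }
  rcases hx with rfl | ⟨b, hb⟩
  · exact σ.apply_apply_comm_of_isPrimitiveRoot τ
      (hζ.of_map_of_injective (f := L.val) L.val.injective)
  · exact σ.apply_apply_comm_of_sq_eq_algebraMap τ (b := b) (Subtype.ext hb.symm)

end IntermediateField

theorem IsPrimitiveRoot.exists_sq_eq_and_eq_mul_pow {K : Type*} [Field K] {m : ℕ} [NeZero m]
    {ζ : K} (hζ : IsPrimitiveRoot ζ (2 * m)) {a b e : K} (he : e ^ m = 1)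
    (ha : a ^ 2 = b * e) : ∃ x : K, ∃ k : ℕ, x ^ 2 = b ∧ a = x * ζ ^ k := by
  have hζ2 : IsPrimitiveRoot (ζ ^ 2) m := hζ.pow (Nat.mul_pos two_pos (NeZero.pos m)) rfl
  obtain ⟨k, -, hk⟩ := hζ2.eq_pow_of_pow_eq_one he
  have hζ0 : ζ ≠ 0 := hζ.ne_zero (NeZero.ne _)
  refine ⟨a / ζ ^ k, k, ?_, (div_mul_cancel₀ a (pow_ne_zero _ hζ0)).symm⟩
  rw [div_pow, ha, ← hk, ← pow_mul, ← pow_mul, mul_comm 2 k, mul_div_assoc,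
    div_self (pow_ne_zero _ hζ0), mul_one]

theorem algebraMap_mem_of_adjoin_eq_top {F H Ω : Type*} [CommSemiring F] [CommSemiring H]
    [Semiring Ω] [Algebra F H] [Algebra F Ω] [Algebra H Ω] [IsScalarTower F H Ω] {s : Set H}
    (hs : Algebra.adjoin F s = ⊤) {L : Subalgebra F Ω} (h : ∀ x ∈ s, algebraMap H Ω x ∈ L)
    (y : H) : algebraMap H Ω y ∈ L :=
  (Algebra.adjoin_le h : Algebra.adjoin F s ≤ L.comap (IsScalarTower.toAlgHom F H Ω))
    (hs ▸ Algebra.mem_top)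

theorem center_extension_abelian_general
    (F H : Type*) [Field F] [Field H] [Algebra F H]
    [NumberField F]
    (S : Type*) (α : S → Hˣ)
    (c : H ≃ₐ[F] H)
    (hαc : ∀ s : S, (α s : H) * c (α s) ∈ (algebraMap F H).range)
    (m : ℕ) (hm : 0 < m) (ε : S → Hˣ) (hε : ∀ s : S, (ε s) ^ m = 1)
    (hsq : ∀ s : S, (α s : H) ^ 2 = (α s : H) * c (α s) * (ε s : H))
    (hgen : Algebra.adjoin F (Set.range fun s => (α s : H)) = ⊤)
    (Ω : Type*) [Field Ω] [Algebra F Ω] [Algebra H Ω] [IsScalarTower F H Ω]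
    (ζ : Ω) (hζ : IsPrimitiveRoot ζ (2 * m)) :
    (∀ h : H, algebraMap H Ω h ∈
        IntermediateField.adjoin F
          (insert ζ {x : Ω | ∃ s : S, x ^ 2 = algebraMap H Ω ((α s : H) * c (α s))})) ∧
    IsGalois F H ∧ (∀ σ τ : H ≃ₐ[F] H, σ * τ = τ * σ) := by
  have : NeZero m := ⟨hm.ne'⟩
  set L := adjoin F (insert ζ {x : Ω | ∃ s : S, x ^ 2 = algebraMap H Ω ((α s : H) * c (α s))})
  have hH : ∀ h : H, algebraMap H Ω h ∈ L := by
    refine algebraMap_mem_of_adjoin_eq_top (L := L.toSubalgebra) hgen ?_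
    rintro _ ⟨s, rfl⟩
    have hεs : algebraMap H Ω (ε s) ^ m = 1 := by
      rw [← map_pow, ← Units.val_pow_eq_pow_val, hε s, Units.val_one, map_one]
    obtain ⟨x, k, hx, hαx⟩ := hζ.exists_sq_eq_and_eq_mul_pow hεs
      (a := algebraMap H Ω (α s)) (by rw [← map_pow, hsq s, map_mul])
    rw [hαx]
    exact mul_mem (subset_adjoin F _ (Set.mem_insert_of_mem ζ ⟨s, hx⟩))
      (pow_mem (subset_adjoin F _ (Set.mem_insert ζ _)) k)
  have hLK : L ≤ adjoin F (insert ζ {x : Ω | x ^ 2 ∈ Set.range (algebraMap F Ω)}) := by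
    refine adjoin.mono _ _ _ (Set.insert_subset_insert ?_)
    rintro x ⟨s, hx⟩
    obtain ⟨b, hb⟩ := hαc s
    exact ⟨b, by rw [hx, ← hb, ← IsScalarTower.algebraMap_apply]⟩
  have := isAbelianGalois_adjoin_insert_sqrt (F := F) hζ
  have : IsAbelianGalois F H :=
    .of_algHom (M := adjoin F (insert ζ {x : Ω | x ^ 2 ∈ Set.range (algebraMap F Ω)}))
      ((IsScalarTower.toAlgHom F H Ω).codRestrict _ fun h => hLK (hH h))
  exact ⟨hH, inferInstance, fun σ τ => IsMulCommutative.is_comm.comm σ τ⟩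

/-- Let `H/F` be a finite extension with `F` a totally real number
field.  Suppose `H` is generated over `F` by elements `α_s` (`s ∈ S`), `c` is an
automorphism of `H/F` of order at most 2 ("complex conjugation") with
`α_s · c(α_s) ∈ F`, and `ε : S → Hˣ` takes values that are `m`-th roots of unity with
`α_s² = α_s · c(α_s) · ε(s)`.  Then (the image of) `H` is contained in the field obtained
from `F` by adjoining the square roots of the `α_s · c(α_s)` together with a primitive
`2m`-th root of unity; in particular `H/F` is abelian. -/
theorem center_extension_abelian
    (F H : Type*) [Field F] [Field H] [Algebra F H] [FiniteDimensional F H]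
    [NumberField F]
    (hreal : ∀ (φ : F →+* ℂ) (x : F), (starRingEnd ℂ) (φ x) = φ x)
    (S : Type*) (α : S → Hˣ)
    (c : H ≃ₐ[F] H) (hc : ∀ x : H, c (c x) = x)
    (hαc : ∀ s : S, (α s : H) * c (α s) ∈ (algebraMap F H).range)
    (m : ℕ) (hm : 0 < m) (ε : S → Hˣ) (hε : ∀ s : S, (ε s) ^ m = 1)
    (hsq : ∀ s : S, (α s : H) ^ 2 = (α s : H) * c (α s) * (ε s : H))
    (hgen : Algebra.adjoin F (Set.range fun s => (α s : H)) = ⊤)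
    (Ω : Type*) [Field Ω] [Algebra F Ω] [Algebra H Ω] [IsScalarTower F H Ω]
    (ζ : Ω) (hζ : IsPrimitiveRoot ζ (2 * m))
    (hsqrt : ∀ s : S, ∃ x : Ω, x ^ 2 = algebraMap H Ω ((α s : H) * c (α s))) :
    (∀ h : H, algebraMap H Ω h ∈
        IntermediateField.adjoin F
          (insert ζ {x : Ω | ∃ s : S, x ^ 2 = algebraMap H Ω ((α s : H) * c (α s))})) ∧
    IsGalois F H ∧ (∀ σ τ : H ≃ₐ[F] H, σ * τ = τ * σ) :=
  center_extension_abelian_general F H S α c hαc m hm ε hε hsq hgen Ω ζ hζ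
end

section
/- Let k₀ be a field of characteristic zero, Δ ∈ k₀ˣ a non-square, k = k₀(√Δ), and suppose √−2 ∉ k. Let s denote the element of Gal(k(√−2)/k₀) fixing k₀(√−2). Let α ∈ kˣ with Nm_{k/k₀}(α) = −2β² for some β ∈ k₀ˣ, and let σ̃ ∈ Gal(k(√−2, √α)/k₀) be any lift of s. Then σ̃(σ̃(√α)) = √α. If instead Nm_{k/k₀}(α) = −2Δβ² for some β ∈ k₀ˣ, then σ̃(σ̃(√α)) = −√α. -/
/-- Let `k₀` be a field of characteristic zero, `Δ ∈ k₀ˣ` a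
non-square, `k = k₀(√Δ)`, with `√−2 ∉ k`.  Let `σ̃` be any automorphism (of a larger
field `M` containing `k(√−2, √α)`) lifting the element `s` of `Gal(k(√−2)/k₀)` that
fixes `k₀(√−2)` (so `σ̃(√Δ) = −√Δ`, `σ̃(√−2) = √−2`).  Let `α ∈ kˣ` (realized as
`sqα² ∈ k₀(√Δ)`).  If `Nm_{k/k₀}(α) = α·σ(α) = −2β²` with `β ∈ k₀ˣ` then
`σ̃(σ̃(√α)) = √α`; if instead `α·σ(α) = −2Δβ²` then `σ̃(σ̃(√α)) = −√α`. -/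
theorem lift_square_action_sign
    (k₀ M : Type*) [Field k₀] [CharZero k₀] [Field M] [Algebra k₀ M]
    (Δ : k₀) (hΔns : ¬ ∃ x : k₀, x ^ 2 = Δ)
    (sqΔ sq2 sqα : M)
    (hsqΔ : sqΔ ^ 2 = algebraMap k₀ M Δ)
    (hsq2 : sq2 ^ 2 = -2)
    (h2notk : sq2 ∉ IntermediateField.adjoin k₀ ({sqΔ} : Set M))
    (σ : M ≃ₐ[k₀] M) (hσΔ : σ sqΔ = -sqΔ) (hσ2 : σ sq2 = sq2)
    (hαk : sqα ^ 2 ∈ IntermediateField.adjoin k₀ ({sqΔ} : Set M))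
    (hα0 : sqα ≠ 0)
    (β : k₀) (hβ : β ≠ 0) :
    (sqα ^ 2 * σ (sqα ^ 2) = algebraMap k₀ M (-2 * β ^ 2) → σ (σ sqα) = sqα) ∧
    (sqα ^ 2 * σ (sqα ^ 2) = algebraMap k₀ M (-2 * Δ * β ^ 2) → σ (σ sqα) = -sqα) := by
  have hσα : σ sqα ≠ 0 := fun h0 => hα0 (σ.injective (h0.trans (map_zero σ).symm))
  have hσsq : σ (sqα ^ 2) = (σ sqα) ^ 2 := map_pow σ sqα 2
  constructor
  · intro h
    rw [hσsq] at h
    set b : M := sq2 * algebraMap k₀ M β with hbdef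
    have hb2 : b ^ 2 = algebraMap k₀ M (-2 * β ^ 2) := by
      rw [hbdef, map_mul, map_pow, map_neg, map_ofNat]
      linear_combination (algebraMap k₀ M β) ^ 2 * hsq2
    have hσb : σ b = b := by rw [hbdef, map_mul, hσ2, σ.commutes]
    have hfac : (sqα * σ sqα - b) * (sqα * σ sqα + b) = 0 := by
      linear_combination h - hb2
    have ht : σ (sqα * σ sqα) = sqα * σ sqα := by
      rcases mul_eq_zero.mp hfac with h1 | h1
      · rw [sub_eq_zero.mp h1, hσb]
      · rw [eq_neg_of_add_eq_zero_left h1, map_neg, hσb]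
    rw [map_mul] at ht
    exact mul_left_cancel₀ hσα (ht.trans (mul_comm sqα (σ sqα)))
  · intro h
    rw [hσsq] at h
    set b : M := sq2 * sqΔ * algebraMap k₀ M β with hbdef
    have hb2 : b ^ 2 = algebraMap k₀ M (-2 * Δ * β ^ 2) := by
      rw [hbdef, map_mul, map_mul, map_pow, map_neg, map_ofNat]
      linear_combination (sqΔ ^ 2 * (algebraMap k₀ M β) ^ 2) * hsq2 +
        (-2 * (algebraMap k₀ M β) ^ 2) * hsqΔ
    have hσb : σ b = -b := by
      rw [hbdef, map_mul, map_mul, hσ2, hσΔ, σ.commutes]; ring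
    have hfac : (sqα * σ sqα - b) * (sqα * σ sqα + b) = 0 := by
      linear_combination h - hb2
    have ht : σ (sqα * σ sqα) = -(sqα * σ sqα) := by
      rcases mul_eq_zero.mp hfac with h1 | h1
      · rw [sub_eq_zero.mp h1, hσb]
      · rw [eq_neg_of_add_eq_zero_left h1, map_neg, hσb, neg_neg]
    rw [map_mul] at ht
    have : σ sqα * σ (σ sqα) = σ sqα * (-sqα) := ht.trans (by ring)
    exact mul_left_cancel₀ hσα this
end
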